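/- arXiv:2605.04550 — 2 statements merged into one kernel-verified Lean document; each statement's English description precedes it below -/
import Mathlib

section
/- Let A be an n×n complex matrix (n ≥ 1), ε > 0, and z ∈ ℂ. Then σ_min(zI − A) ≤ ε if and only if there exists an n×n complex matrix E with operator 2-norm ‖E‖₂ ≤ ε such that z is an eigenvalue of A + E. Consequently the set {z : σ_min(zI − A) ≤ ε} equals the union over all perturbations E with ‖E‖₂ ≤ ε of the spectra σ(A + E). -/
open Matrix

/-- The smallest singular value of a complex square matrix:
`σ_min(M) = inf { ‖M v‖₂ : v ∈ ℂⁿ, ‖v‖₂ = 1 }`, with the Euclidean norm. -/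
noncomputable def sigmaMin {n : ℕ} (M : Matrix (Fin n) (Fin n) ℂ) : ℝ :=
  sInf {r : ℝ | ∃ v : EuclideanSpace ℂ (Fin n), ‖v‖ = 1 ∧
    r = ‖Matrix.toEuclideanCLM (𝕜 := ℂ) M v‖}

/-- The operator 2-norm of a complex square matrix, i.e. the operator norm of the
associated linear map on `EuclideanSpace ℂ (Fin n)`. -/
noncomputable def opNorm2 {n : ℕ} (M : Matrix (Fin n) (Fin n) ℂ) : ℝ :=
  ‖Matrix.toEuclideanCLM (𝕜 := ℂ) M‖

/-- The spectrum of a complex square matrix: the set of eigenvalues,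
`{z ∈ ℂ : det(zI − A) = 0}`. -/
def spec {n : ℕ} (A : Matrix (Fin n) (Fin n) ℂ) : Set ℂ :=
  {z : ℂ | (z • (1 : Matrix (Fin n) (Fin n) ℂ) - A).det = 0}

private lemma key_iff {n : ℕ} (hn : 1 ≤ n) (A : Matrix (Fin n) (Fin n) ℂ) (ε : ℝ)
    (hε : 0 < ε) (z : ℂ) :
    sigmaMin (z • (1 : Matrix (Fin n) (Fin n) ℂ) - A) ≤ ε ↔
      ∃ E : Matrix (Fin n) (Fin n) ℂ, opNorm2 E ≤ ε ∧ z ∈ spec (A + E) := by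
  set M : Matrix (Fin n) (Fin n) ℂ := z • (1 : Matrix (Fin n) (Fin n) ℂ) - A with hM
  have hSM : ∀ E : Matrix (Fin n) (Fin n) ℂ,
      z • (1 : Matrix (Fin n) (Fin n) ℂ) - (A + E) = M - E := by
    intro E; rw [hM]; abel
  set T := Matrix.toEuclideanCLM (𝕜 := ℂ) M with hT
  set S : Set ℝ := {r : ℝ | ∃ v : EuclideanSpace ℂ (Fin n), ‖v‖ = 1 ∧
    r = ‖Matrix.toEuclideanCLM (𝕜 := ℂ) M v‖} with hS
  -- the distinguished unit vector
  have hi0 : (0 : ℕ) < n := hn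
  set e : EuclideanSpace ℂ (Fin n) := EuclideanSpace.single ⟨0, hi0⟩ (1 : ℂ) with he
  have he1 : ‖e‖ = 1 := by simp [he, EuclideanSpace.norm_single]
  have hSne : S.Nonempty := ⟨‖T e‖, e, he1, rfl⟩
  have hSbdd : BddBelow S := by
    refine ⟨0, ?_⟩
    rintro r ⟨v, hv, rfl⟩
    exact norm_nonneg _
  constructor
  · intro hσ
    -- attain the minimum on the unit sphere
    obtain ⟨v, hvmem, hvmin⟩ :=
      (isCompact_sphere (0 : EuclideanSpace ℂ (Fin n)) 1).exists_isMinOn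
        ⟨e, by simpa [mem_sphere_zero_iff_norm] using he1⟩
        (T.continuous.norm.continuousOn)
    rw [mem_sphere_zero_iff_norm] at hvmem
    have hmin : ‖T v‖ ≤ sigmaMin M := by
      apply le_csInf hSne
      rintro r ⟨u, hu, rfl⟩
      exact hvmin (by simpa [mem_sphere_zero_iff_norm] using hu)
    have hTv : ‖T v‖ ≤ ε := hmin.trans hσ
    -- the rank-one perturbation
    set w : Fin n → ℂ := (WithLp.equiv 2 _) (T v) with hw
    set v' : Fin n → ℂ := (WithLp.equiv 2 _) v with hv'
    set E : Matrix (Fin n) (Fin n) ℂ := Matrix.vecMulVec w (star v') with hE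
    have hEmul : ∀ u : EuclideanSpace ℂ (Fin n),
        Matrix.toEuclideanCLM (𝕜 := ℂ) E u = (inner ℂ v u : ℂ) • T v := by
      intro u
      apply (WithLp.equiv 2 (Fin n → ℂ)).injective
      rw [WithLp.equiv_apply, WithLp.equiv_apply, Matrix.ofLp_toEuclideanCLM, WithLp.ofLp_smul]
      funext i
      simp only [hE, Matrix.mulVec, Matrix.vecMulVec_apply, dotProduct,
        Pi.star_apply, Pi.smul_apply, smul_eq_mul]
      rw [show (inner ℂ v u : ℂ) = ∑ j, starRingEnd ℂ (v j) * u j from by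
        simp [PiLp.inner_apply, RCLike.inner_apply, mul_comm], Finset.sum_mul]
      apply Finset.sum_congr rfl
      intro j _
      show (T v) i * star (v j) * u j = (starRingEnd ℂ) (v j) * u j * (T v) i
      rw [RCLike.star_def]
      ring
    have hEnorm : opNorm2 E ≤ ε := by
      rw [opNorm2]
      apply ContinuousLinearMap.opNorm_le_bound _ hε.le
      intro u
      rw [hEmul u, norm_smul]
      calc ‖(inner ℂ v u : ℂ)‖ * ‖T v‖ ≤ (‖v‖ * ‖u‖) * ‖T v‖ := by
            apply mul_le_mul_of_nonneg_right (norm_inner_le_norm v u) (norm_nonneg _)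
        _ = ‖T v‖ * ‖u‖ := by rw [hvmem]; ring
        _ ≤ ε * ‖u‖ := mul_le_mul_of_nonneg_right hTv (norm_nonneg _)
    refine ⟨E, hEnorm, ?_⟩
    have hEv : Matrix.toEuclideanCLM (𝕜 := ℂ) E v = T v := by
      rw [hEmul v]
      have : (inner ℂ v v : ℂ) = 1 := by
        rw [inner_self_eq_norm_sq_to_K, hvmem]; norm_num
      rw [this, one_smul]
    have hker : Matrix.toEuclideanCLM (𝕜 := ℂ) (M - E) v = 0 := by
      rw [map_sub]
      simp only [ContinuousLinearMap.sub_apply]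
      rw [hEv, ← hT, sub_self]
    have hmv : (M - E) *ᵥ v' = 0 := by
      have := Matrix.ofLp_toEuclideanCLM (𝕜 := ℂ) (M - E) v
      rw [hker] at this
      simpa [hv'] using this.symm
    have hv'ne : v' ≠ 0 := by
      intro h
      have : v = 0 := by
        apply (WithLp.equiv 2 _).injective
        simpa [hv'] using h
      rw [this, norm_zero] at hvmem
      exact one_ne_zero hvmem.symm
    have hdet : (M - E).det = 0 :=
      Matrix.exists_mulVec_eq_zero_iff.mp ⟨v', hv'ne, hmv⟩
    show (z • (1 : Matrix (Fin n) (Fin n) ℂ) - (A + E)).det = 0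
    rw [hSM E]; exact hdet
  · rintro ⟨E, hEnorm, hzspec⟩
    have hdet : (M - E).det = 0 := by
      have : (z • (1 : Matrix (Fin n) (Fin n) ℂ) - (A + E)).det = 0 := hzspec
      rwa [hSM E] at this
    obtain ⟨u', hu'ne, hu'⟩ := Matrix.exists_mulVec_eq_zero_iff.mpr hdet
    set u : EuclideanSpace ℂ (Fin n) := (WithLp.equiv 2 _).symm u' with hu
    have hune : u ≠ 0 := by
      intro h
      apply hu'ne
      have := congrArg (WithLp.equiv 2 (Fin n → ℂ)) h
      simpa [hu] using this
    have hker : Matrix.toEuclideanCLM (𝕜 := ℂ) (M - E) u = 0 := by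
      rw [hu, WithLp.equiv_symm_apply, Matrix.toEuclideanCLM_toLp, hu']
      simp
    have hTu : T u = Matrix.toEuclideanCLM (𝕜 := ℂ) E u := by
      rw [map_sub] at hker
      have := sub_eq_zero.mp hker
      simpa using this
    have hTu_le : ‖T u‖ ≤ ε * ‖u‖ := by
      rw [hTu]
      calc ‖Matrix.toEuclideanCLM (𝕜 := ℂ) E u‖
          ≤ ‖Matrix.toEuclideanCLM (𝕜 := ℂ) E‖ * ‖u‖ :=
            (Matrix.toEuclideanCLM (𝕜 := ℂ) E).le_opNorm u
        _ ≤ ε * ‖u‖ := mul_le_mul_of_nonneg_right hEnorm (norm_nonneg _)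
    have hunorm : (0 : ℝ) < ‖u‖ := norm_pos_iff.mpr hune
    set v : EuclideanSpace ℂ (Fin n) := (‖u‖⁻¹ : ℂ) • u with hv
    have hnormc : ‖(‖u‖ : ℂ)‖ = ‖u‖ := by
      rw [Complex.norm_real, Real.norm_eq_abs, abs_of_nonneg (norm_nonneg u)]
    have hv1 : ‖v‖ = 1 := by
      rw [hv, norm_smul, norm_inv, hnormc, inv_mul_cancel₀ hunorm.ne']
    have hTv : ‖T v‖ ≤ ε := by
      rw [hv, _root_.map_smul, norm_smul, norm_inv, hnormc, inv_mul_le_iff₀ hunorm]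
      calc ‖T u‖ ≤ ε * ‖u‖ := hTu_le
        _ = ‖u‖ * ε := by ring
    calc sigmaMin M ≤ ‖T v‖ := csInf_le hSbdd ⟨v, hv1, rfl⟩
      _ ≤ ε := hTv

/-- `σ_min(zI − A) ≤ ε` iff `z` is an eigenvalue of some perturbation `A + E` with
`‖E‖₂ ≤ ε`; consequently the pseudospectrum is the union of perturbed spectra. -/
theorem sigmaMin_le_iff_exists_perturbation {n : ℕ} (hn : 1 ≤ n)
    (A : Matrix (Fin n) (Fin n) ℂ) (ε : ℝ) (hε : 0 < ε) :
    (∀ z : ℂ, sigmaMin (z • (1 : Matrix (Fin n) (Fin n) ℂ) - A) ≤ ε ↔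
      ∃ E : Matrix (Fin n) (Fin n) ℂ, opNorm2 E ≤ ε ∧ z ∈ spec (A + E)) ∧
    {z : ℂ | sigmaMin (z • (1 : Matrix (Fin n) (Fin n) ℂ) - A) ≤ ε} =
      ⋃ E ∈ {E : Matrix (Fin n) (Fin n) ℂ | opNorm2 E ≤ ε}, spec (A + E) := by
  refine ⟨fun z => key_iff hn A ε hε z, ?_⟩
  ext z
  simp only [Set.mem_setOf_eq, Set.mem_iUnion, exists_prop]
  exact key_iff hn A ε hε z
end

section
/- Let A be an n×n complex matrix (n ≥ 1), ε > 0, and z ∈ ℂ. There exists an n×n complex matrix E with ‖E‖₂ ≤ ε and det(zI − A − E) = 0 if and only if there exists a nonzero vector v ∈ ℂⁿ with ‖(zI − A)v‖₂ ≤ ε‖v‖₂. -/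
open Matrix

private lemma vecMulVec_mulVec' {n : ℕ} (w u y : Fin n → ℂ) :
    Matrix.vecMulVec w u *ᵥ y = (u ⬝ᵥ y) • w := by
  funext i
  simp [Matrix.mulVec, dotProduct, Matrix.vecMulVec_apply, Finset.mul_sum,
    mul_comm, mul_left_comm, mul_assoc]

private lemma toEuclideanCLM_piLp_equiv_symm' {n : ℕ} (A : Matrix (Fin n) (Fin n) ℂ)
    (x : Fin n → ℂ) :
    Matrix.toEuclideanCLM (𝕜 := ℂ) A ((WithLp.equiv 2 (Fin n → ℂ)).symm x) =
      (WithLp.equiv 2 (Fin n → ℂ)).symm (Matrix.toLin' A x) := rfl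

private lemma equiv_symm_zero' (n : ℕ) :
    (WithLp.equiv 2 (Fin n → ℂ)).symm 0 = 0 := rfl

private lemma equiv_symm_smul' {n : ℕ} (c : ℂ) (x : Fin n → ℂ) :
    (WithLp.equiv 2 (Fin n → ℂ)).symm (c • x) = c • (WithLp.equiv 2 (Fin n → ℂ)).symm x := rfl


/-- There is a perturbation `E` with `‖E‖₂ ≤ ε` making `zI − A − E` singular iff
`A` has an ε-approximate eigenvector for the value `z`. -/
theorem exists_perturbation_iff_approx_eigenvector {n : ℕ} (hn : 1 ≤ n)
    (A : Matrix (Fin n) (Fin n) ℂ) (ε : ℝ) (hε : 0 < ε) (z : ℂ) :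
    (∃ E : Matrix (Fin n) (Fin n) ℂ, opNorm2 E ≤ ε ∧
        (z • (1 : Matrix (Fin n) (Fin n) ℂ) - A - E).det = 0) ↔
      ∃ v : EuclideanSpace ℂ (Fin n), v ≠ 0 ∧
        ‖Matrix.toEuclideanCLM (𝕜 := ℂ) (z • (1 : Matrix (Fin n) (Fin n) ℂ) - A) v‖ ≤
          ε * ‖v‖ := by
  set M : Matrix (Fin n) (Fin n) ℂ := z • (1 : Matrix (Fin n) (Fin n) ℂ) - A with hM
  constructor
  · rintro ⟨E, hE, hdet⟩
    obtain ⟨x, hx, hmul⟩ := Matrix.exists_mulVec_eq_zero_iff.mpr hdet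
    have hMx : M *ᵥ x = E *ᵥ x := by
      rw [Matrix.sub_mulVec] at hmul
      exact sub_eq_zero.mp hmul
    refine ⟨(WithLp.equiv 2 (Fin n → ℂ)).symm x, ?_, ?_⟩
    · simpa using (WithLp.equiv 2 (Fin n → ℂ)).symm.injective.ne_iff'
        (equiv_symm_zero' n) |>.mpr hx
    · have h1 : Matrix.toEuclideanCLM (𝕜 := ℂ) M ((WithLp.equiv 2 (Fin n → ℂ)).symm x) =
          (WithLp.equiv 2 (Fin n → ℂ)).symm (M *ᵥ x) := by
        rw [toEuclideanCLM_piLp_equiv_symm', Matrix.toLin'_apply]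
      have h2 : Matrix.toEuclideanCLM (𝕜 := ℂ) E ((WithLp.equiv 2 (Fin n → ℂ)).symm x) =
          (WithLp.equiv 2 (Fin n → ℂ)).symm (E *ᵥ x) := by
        rw [toEuclideanCLM_piLp_equiv_symm', Matrix.toLin'_apply]
      rw [h1, hMx, ← h2]
      calc ‖Matrix.toEuclideanCLM (𝕜 := ℂ) E ((WithLp.equiv 2 (Fin n → ℂ)).symm x)‖
          ≤ ‖Matrix.toEuclideanCLM (𝕜 := ℂ) E‖ * ‖(WithLp.equiv 2 (Fin n → ℂ)).symm x‖ :=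
            (Matrix.toEuclideanCLM (𝕜 := ℂ) E).le_opNorm _
        _ ≤ ε * ‖(WithLp.equiv 2 (Fin n → ℂ)).symm x‖ :=
            mul_le_mul_of_nonneg_right hE (norm_nonneg _)
  · rintro ⟨v, hv, hle⟩
    set x : Fin n → ℂ := WithLp.equiv 2 (Fin n → ℂ) v with hx
    set w : Fin n → ℂ := M *ᵥ x with hw
    have hvx : (WithLp.equiv 2 (Fin n → ℂ)).symm x = v := by simp [hx]
    have hnv : (0:ℝ) < ‖v‖ := norm_pos_iff.mpr hv
    set E : Matrix (Fin n) (Fin n) ℂ :=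
      ((‖v‖:ℂ)^2)⁻¹ • Matrix.vecMulVec w (star x) with hE
    have hinner : ∀ y : EuclideanSpace ℂ (Fin n),
        star x ⬝ᵥ (WithLp.equiv 2 (Fin n → ℂ)) y = (inner ℂ v y : ℂ) := by
      intro y
      rw [EuclideanSpace.inner_eq_star_dotProduct]
      exact dotProduct_comm _ _
    have hEmul : ∀ y : Fin n → ℂ,
        E *ᵥ y = (((‖v‖:ℂ)^2)⁻¹ * (star x ⬝ᵥ y)) • w := by
      intro y
      rw [hE, Matrix.smul_mulVec, vecMulVec_mulVec', smul_smul]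
    have hself : star x ⬝ᵥ x = (‖v‖:ℂ)^2 := by
      have := hinner v
      rw [inner_self_eq_norm_sq_to_K (𝕜 := ℂ) v] at this
      simpa [hx] using this
    have hEx : E *ᵥ x = w := by
      rw [hEmul, hself, inv_mul_cancel₀ (by exact_mod_cast pow_ne_zero 2 (Complex.ofReal_ne_zero.mpr hnv.ne')), one_smul]
    refine ⟨E, ?_, ?_⟩
    · rw [opNorm2]
      refine ContinuousLinearMap.opNorm_le_bound _ hε.le fun y => ?_
      have hy : y = (WithLp.equiv 2 (Fin n → ℂ)).symm ((WithLp.equiv 2 (Fin n → ℂ)) y) := by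
        simp
      rw [hy, toEuclideanCLM_piLp_equiv_symm', Matrix.toLin'_apply, hEmul,
        equiv_symm_smul']
      have hwv : (WithLp.equiv 2 (Fin n → ℂ)).symm w =
          Matrix.toEuclideanCLM (𝕜 := ℂ) M v := by
        rw [← hvx, toEuclideanCLM_piLp_equiv_symm', Matrix.toLin'_apply]
      rw [hwv, norm_smul]
      have h1 : ‖((‖v‖:ℂ)^2)⁻¹ * (star x ⬝ᵥ (WithLp.equiv 2 (Fin n → ℂ)) y)‖ ≤
          (‖v‖^2)⁻¹ * (‖v‖ * ‖y‖) := by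
        rw [norm_mul, hinner]
        have : ‖((‖v‖:ℂ)^2)⁻¹‖ = (‖v‖^2)⁻¹ := by
          rw [norm_inv]
          norm_cast
          simp [abs_of_nonneg (norm_nonneg v)]
        rw [this]
        exact mul_le_mul_of_nonneg_left (norm_inner_le_norm v y) (by positivity)
      calc ‖((‖v‖:ℂ)^2)⁻¹ * (star x ⬝ᵥ (WithLp.equiv 2 (Fin n → ℂ)) y)‖ *
            ‖Matrix.toEuclideanCLM (𝕜 := ℂ) M v‖
          ≤ ((‖v‖^2)⁻¹ * (‖v‖ * ‖y‖)) * (ε * ‖v‖) := by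
            apply mul_le_mul h1 hle (norm_nonneg _) (by positivity)
        _ = ε * ‖y‖ := by field_simp
      -- simplify ‖(WithLp.equiv ...).symm ((WithLp.equiv ...) y)‖ = ‖y‖ handled: we rewrote y
    · apply Matrix.exists_mulVec_eq_zero_iff.mp
      refine ⟨x, ?_, ?_⟩
      · intro h
        apply hv
        rw [← hvx, h, equiv_symm_zero' n]
      · rw [Matrix.sub_mulVec, hEx, sub_self]
end
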